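/- Let 𝒟 ⊂ ℝ^d be a bounded domain, ε ∈ (0,1), Q = (-1/2,1/2)^d, I_ε = {k ∈ ℤ^d : ε(Q+k) ∩ 𝒟 ≠ ∅}, and let 𝒟_ε^c = {x ∈ 𝒟 : dist(x, ∂𝒟) < ε} and J_ε = {j ∈ ℤ^d : ε(Q+j) ∩ 𝒟_ε^c ≠ ∅}. Suppose g ∈ L²_loc(ℝ^d) satisfies |g(y)| ≤ C(1+|y|)^{1-d}. Then there exist ρ > 0 and C' > 0 (independent of ε) such that Σ_{k∈I_ε} ∫_{𝒟_ε^c} g(x/ε − k)² dx ≤ ε^{d} Card(J_ε) ∫_{B(0,ρ/ε)} g² ≤ C' ε R_{d,ε}, where R_{d,ε} = 1 + log(1/ε) if d = 2 and R_{d,ε} = 1 if d ≥ 3. -/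

import Mathlib

/-!
Up to the null set of cube faces, the boundary layer is covered by the cubes `ε (Q + j)`,
`j ∈ J_ε`, and the substitution `y = x / ε - k` turns the integral over `ε (Q + j)` into
`ε^d ∫_{Q + j - k} g²`. For fixed `j` the unit cubes `Q + j - k`, `k ∈ I_ε`, are disjoint,
and they lie in `B(0, ρ/ε)` because both `ε (Q + j)` and `ε (Q + k)` meet the bounded `𝒟`;
summing over `k` gives the first inequality. For the second, polar coordinates give
`∫_{B(0,R)} (1 + |y|)^{2(1-d)} ≤ d |B_1| ∫_0^R (1 + r)^{1-d} dr`, which is `log (1 + R)` for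
`d = 2` and bounded for `d ≥ 3`, while `ε^d Card(J_ε) ≤ C ε`.
-/

open MeasureTheory Metric Set Function

theorem integral_one_add_rpow_neg_one {R : ℝ} (hR : 0 ≤ R) :
    ∫ r in (0 : ℝ)..R, (1 + r) ^ (-1 : ℝ) = Real.log (1 + R) := by
  have h0 : (0 : ℝ) ∉ uIcc 1 (1 + R) := by
    rw [uIcc_of_le (by linarith)]
    exact fun h => by linarith [h.1]
  simp_rw [Real.rpow_neg_one]
  rw [intervalIntegral.integral_comp_add_left (fun r => r⁻¹), add_zero, integral_inv h0, div_one]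

theorem integral_one_add_rpow_le {s R : ℝ} (hs : s < -1) (hR : 0 ≤ R) :
    ∫ r in (0 : ℝ)..R, (1 + r) ^ s ≤ 1 / (-s - 1) := by
  have h0 : (0 : ℝ) ∉ uIcc 1 (1 + R) := by
    rw [uIcc_of_le (by linarith)]
    exact fun h => by linarith [h.1]
  have hpos : 0 < (1 + R) ^ (s + 1) := Real.rpow_pos_of_pos (by linarith) _
  rw [intervalIntegral.integral_comp_add_left (fun r => r ^ s), add_zero,
    integral_rpow (Or.inr ⟨hs.ne, h0⟩), Real.one_rpow]
  calc ((1 + R) ^ (s + 1) - 1) / (s + 1) = (1 - (1 + R) ^ (s + 1)) / (-s - 1) := by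
        rw [← neg_div_neg_eq]; ring_nf
    _ ≤ 1 / (-s - 1) := by gcongr <;> linarith

theorem log_one_add_div_le {ρ ε : ℝ} (hρ : 0 ≤ ρ) (hε : 0 < ε) (hε1 : ε ≤ 1) :
    Real.log (1 + ρ / ε) ≤ (1 + Real.log (1 + ρ)) * (1 + Real.log (1 / ε)) := by
  have ha : 0 ≤ Real.log (1 + ρ) := Real.log_nonneg (by linarith)
  have hb : 0 ≤ Real.log (1 / ε) := Real.log_nonneg (by rw [le_div_iff₀ hε]; linarith)
  calc Real.log (1 + ρ / ε) ≤ Real.log ((1 + ρ) * (1 / ε)) := by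
        gcongr
        rw [mul_one_div, add_div]
        gcongr
        rw [le_div_iff₀ hε]
        linarith
    _ = Real.log (1 + ρ) + Real.log (1 / ε) := Real.log_mul (by positivity) (by positivity)
    _ ≤ (1 + Real.log (1 + ρ)) * (1 + Real.log (1 / ε)) := by nlinarith

section Radial
variable {E : Type*} [NormedAddCommGroup E] [NormedSpace ℝ E] [MeasurableSpace E]
  [BorelSpace E] [FiniteDimensional ℝ E] [Nontrivial E] (μ : Measure E) [μ.IsAddHaarMeasure]

theorem setIntegral_ball_fun_norm (f : ℝ → ℝ) (R : ℝ) :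
    ∫ x in ball (0 : E) R, f ‖x‖ ∂μ =
      Module.finrank ℝ E * μ.real (ball 0 1) *
        ∫ r in Ioo 0 R, r ^ (Module.finrank ℝ E - 1) * f r := by
  have hind :
      (ball (0 : E) R).indicator (fun x => f ‖x‖) = fun x => (Iio R).indicator f ‖x‖ := by
    ext x; by_cases h : ‖x‖ < R <;> simp [indicator, h]
  have hind' : (fun r : ℝ => r ^ (Module.finrank ℝ E - 1) • (Iio R).indicator f r) =
      (Iio R).indicator (fun r => r ^ (Module.finrank ℝ E - 1) * f r) := by
    ext r; by_cases h : r < R <;> simp [indicator, h]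
  rw [← integral_indicator measurableSet_ball, hind, integral_fun_norm_addHaar, hind',
    setIntegral_indicator measurableSet_Iio, Ioi_inter_Iio, nsmul_eq_mul, smul_eq_mul, mul_assoc]

theorem setIntegral_ball_one_add_norm_rpow_le {R : ℝ} (hR : 0 ≤ R) :
    ∫ x in ball (0 : E) R, (1 + ‖x‖) ^ (2 * (1 - Module.finrank ℝ E) : ℝ) ∂μ ≤
      Module.finrank ℝ E * μ.real (ball 0 1) *
        ∫ r in (0 : ℝ)..R, (1 + r) ^ (1 - Module.finrank ℝ E : ℝ) := by
  set n := Module.finrank ℝ E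
  have hn : 1 ≤ n := Module.finrank_pos
  have hcont : ∀ p : ℝ, ContinuousOn (fun r : ℝ => (1 + r) ^ p) (Icc 0 R) := fun p =>
    ContinuousOn.rpow_const (by fun_prop) fun r hr => Or.inl (by linarith [hr.1])
  rw [setIntegral_ball_fun_norm μ (fun r => (1 + r) ^ (2 * (1 - n) : ℝ)),
    intervalIntegral.integral_of_le hR, integral_Ioc_eq_integral_Ioo]
  gcongr with r hr
  · exact ((continuousOn_pow _).mul (hcont _)).integrableOn_Icc.mono_set Ioo_subset_Icc_self
  · exact (hcont _).integrableOn_Icc.mono_set Ioo_subset_Icc_self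
  · exact measurableSet_Ioo.nullMeasurableSet
  · have h1 : 0 < 1 + r := by linarith [hr.1]
    calc r ^ (n - 1) * (1 + r) ^ (2 * (1 - n) : ℝ)
        ≤ (1 + r) ^ ((n - 1 : ℕ) : ℝ) * (1 + r) ^ (2 * (1 - n) : ℝ) := by
          rw [Real.rpow_natCast]; gcongr; linarith [hr.1]; linarith
      _ = (1 + r) ^ (1 - n : ℝ) := by
          rw [← Real.rpow_add h1, Nat.cast_sub hn]; ring_nf

theorem setIntegral_ball_one_add_norm_rpow_le_of_two_le (hn : 2 ≤ Module.finrank ℝ E) {R : ℝ}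
    (hR : 0 ≤ R) :
    ∫ x in ball (0 : E) R, (1 + ‖x‖) ^ (2 * (1 - Module.finrank ℝ E) : ℝ) ∂μ ≤
      Module.finrank ℝ E * μ.real (ball 0 1) *
        if Module.finrank ℝ E = 2 then Real.log (1 + R) else 1 := by
  refine (setIntegral_ball_one_add_norm_rpow_le μ hR).trans ?_
  gcongr
  split_ifs with h2
  · rw [h2, show (1 - ((2 : ℕ) : ℝ)) = -1 by norm_num, integral_one_add_rpow_neg_one hR]
  · have h3 : (3 : ℝ) ≤ Module.finrank ℝ E := by
      exact_mod_cast (by omega : 3 ≤ Module.finrank ℝ E)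
    refine (integral_one_add_rpow_le (by linarith) hR).trans ?_
    rw [div_le_one (by linarith)]
    linarith

end Radial

section Decay
variable {E : Type*} [NormedAddCommGroup E] {g : E → ℝ} {C s : ℝ}

theorem sq_le_of_abs_le_mul_one_add_norm_rpow (hgC : ∀ y, |g y| ≤ C * (1 + ‖y‖) ^ s)
    (y : E) : g y ^ 2 ≤ C ^ 2 * (1 + ‖y‖) ^ (2 * s) := by
  rw [← sq_abs, mul_comm 2 s, Real.rpow_mul (by positivity), Real.rpow_two, ← mul_pow]
  exact pow_le_pow_left₀ (abs_nonneg _) (hgC y) 2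

variable [MeasurableSpace E] [BorelSpace E] [ProperSpace E] (μ : Measure E)
  [IsFiniteMeasureOnCompacts μ]

theorem integrableOn_one_add_norm_rpow (t : ℝ) {S : Set E} (hS : Bornology.IsBounded S) :
    IntegrableOn (fun y => (1 + ‖y‖) ^ t) S μ := by
  have hcont : Continuous fun y : E => (1 + ‖y‖) ^ t :=
    (continuous_const.add continuous_norm).rpow_const fun y =>
      Or.inl (by positivity : (0 : ℝ) < 1 + ‖y‖).ne'
  exact (hcont.continuousOn.integrableOn_compact hS.isCompact_closure).mono_set subset_closure

theorem integrableOn_sq_of_abs_le_mul_one_add_norm_rpow (hg : AEStronglyMeasurable g μ)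
    (hgC : ∀ y, |g y| ≤ C * (1 + ‖y‖) ^ s) {S : Set E} (hS : Bornology.IsBounded S) :
    IntegrableOn (fun y => g y ^ 2) S μ := by
  refine ((integrableOn_one_add_norm_rpow μ (2 * s) hS).const_mul (C ^ 2)).mono'
    (hg.pow 2).restrict (ae_of_all _ fun y => ?_)
  rw [Real.norm_of_nonneg (sq_nonneg _)]
  exact sq_le_of_abs_le_mul_one_add_norm_rpow hgC y

theorem setIntegral_sq_le_of_abs_le_mul_one_add_norm_rpow (hg : AEStronglyMeasurable g μ)
    (hgC : ∀ y, |g y| ≤ C * (1 + ‖y‖) ^ s) {S : Set E} (hS : Bornology.IsBounded S) :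
    ∫ y in S, g y ^ 2 ∂μ ≤ C ^ 2 * ∫ y in S, (1 + ‖y‖) ^ (2 * s) ∂μ := by
  rw [← integral_const_mul]
  exact setIntegral_mono (integrableOn_sq_of_abs_le_mul_one_add_norm_rpow μ hg hgC hS)
    ((integrableOn_one_add_norm_rpow μ _ hS).const_mul _)
    (sq_le_of_abs_le_mul_one_add_norm_rpow hgC)

end Decay

theorem setIntegral_ball_div_sq_le {E : Type*} [NormedAddCommGroup E] [NormedSpace ℝ E]
    [MeasurableSpace E] [BorelSpace E] [FiniteDimensional ℝ E] (μ : Measure E)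
    [μ.IsAddHaarMeasure] (hn : 2 ≤ Module.finrank ℝ E) {g : E → ℝ}
    (hg : AEStronglyMeasurable g μ) {C : ℝ}
    (hgC : ∀ y, |g y| ≤ C * (1 + ‖y‖) ^ (1 - Module.finrank ℝ E : ℝ))
    {ρ ε : ℝ} (hρ : 0 ≤ ρ) (hε : 0 < ε) (hε1 : ε ≤ 1) :
    ∫ y in ball (0 : E) (ρ / ε), g y ^ 2 ∂μ ≤
      C ^ 2 * (Module.finrank ℝ E * μ.real (ball 0 1) * (1 + Real.log (1 + ρ))) *
        if Module.finrank ℝ E = 2 then 1 + Real.log (1 / ε) else 1 := by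
  have : Nontrivial E := Module.nontrivial_of_finrank_pos (R := ℝ) (by omega)
  calc ∫ y in ball (0 : E) (ρ / ε), g y ^ 2 ∂μ
      ≤ C ^ 2 * ∫ y in ball (0 : E) (ρ / ε),
          (1 + ‖y‖) ^ (2 * (1 - Module.finrank ℝ E : ℝ)) ∂μ :=
        setIntegral_sq_le_of_abs_le_mul_one_add_norm_rpow μ hg hgC isBounded_ball
    _ ≤ C ^ 2 * (Module.finrank ℝ E * μ.real (ball 0 1) *
          if Module.finrank ℝ E = 2 then Real.log (1 + ρ / ε) else 1) := by
        gcongr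
        exact setIntegral_ball_one_add_norm_rpow_le_of_two_le μ hn (by positivity)
    _ ≤ _ := by
        rw [mul_assoc (C ^ 2), mul_assoc _ (1 + _)]
        gcongr
        split_ifs
        · exact log_one_add_div_le hρ hε hε1
        · simp [Real.log_nonneg (by linarith : (1 : ℝ) ≤ 1 + ρ)]

theorem sum_setIntegral_le_setIntegral {X κ : Type*} [MeasurableSpace X] {μ : Measure X}
    {f : X → ℝ} (hf : 0 ≤ f) {t : Set X} (hft : IntegrableOn f t μ) {u : Finset κ}
    {s : κ → Set X} (hs : ∀ k ∈ u, MeasurableSet (s k))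
    (hd : (u : Set κ).Pairwise (Disjoint on s)) (hst : ∀ k ∈ u, s k ⊆ t) :
    ∑ k ∈ u, ∫ x in s k, f x ∂μ ≤ ∫ x in t, f x ∂μ := by
  rw [← integral_biUnion_finset u hs hd fun k hk => hft.mono_set (hst k hk)]
  exact setIntegral_mono_set hft (ae_of_all _ hf) (iUnion₂_subset hst).eventuallyLE

section Grid
variable {ι : Type*}

/-- The open cube `ε (Q + j)` with `Q = (-1/2, 1/2)^ι`. -/
def gridCube (ε : ℝ) (j : ι → ℤ) : Set (EuclideanSpace ℝ ι) :=
  {x | ∀ i, |x i - ε * j i| < ε / 2}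

noncomputable def rescale (ε : ℝ) (k : ι → ℤ) (x : EuclideanSpace ℝ ι) :
    EuclideanSpace ℝ ι :=
  WithLp.toLp 2 fun i => x i / ε - k i

theorem EuclideanSpace.norm_le_sqrt_card_mul [Fintype ι] {x : EuclideanSpace ℝ ι} {r : ℝ}
    (hr : 0 ≤ r) (hx : ∀ i, |x i| ≤ r) : ‖x‖ ≤ √(Fintype.card ι) * r := by
  rw [EuclideanSpace.norm_eq]
  calc √(∑ i, ‖x i‖ ^ 2) ≤ √(∑ _ : ι, r ^ 2) := by
        gcongr with i; rw [Real.norm_eq_abs]; exact hx i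
    _ = √(Fintype.card ι) * r := by
        rw [Finset.sum_const, Finset.card_univ, nsmul_eq_mul, Real.sqrt_mul (by positivity),
          Real.sqrt_sq hr]

theorem isOpen_gridCube [Fintype ι] (ε : ℝ) (j : ι → ℤ) : IsOpen (gridCube ε j) := by
  simp only [gridCube, ofPred_forall]
  exact isOpen_iInter_of_finite fun i => isOpen_lt (by fun_prop) continuous_const

theorem pairwise_disjoint_gridCube {ε : ℝ} (hε : 0 < ε) :
    Pairwise (Disjoint on gridCube (ι := ι) ε) := by
  intro j j' hne
  refine Set.disjoint_left.2 fun x hx hx' => hne (funext fun i => ?_)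
  obtain ⟨h1, h2⟩ := abs_lt.1 (hx i)
  obtain ⟨h1', h2'⟩ := abs_lt.1 (hx' i)
  have hlt : ((j i : ℝ) - j' i) < 1 := lt_of_mul_lt_mul_left (by linarith) hε.le
  have hgt : ((j' i : ℝ) - j i) < 1 := lt_of_mul_lt_mul_left (by linarith) hε.le
  have : j i - j' i < 1 := by exact_mod_cast hlt
  have : j' i - j i < 1 := by exact_mod_cast hgt
  omega

theorem exists_abs_sub_mul_lt_half {ε t : ℝ} (hε : 0 < ε)
    (ht : t ∉ range fun m : ℤ => ε * m + ε / 2) : ∃ m : ℤ, |t - ε * m| < ε / 2 := by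
  have hscale : ε * (t / ε - 1 / 2) = t - ε / 2 := by field_simp
  set m := ⌈t / ε - 1 / 2⌉
  have hup : ε * m < ε * (t / ε - 1 / 2 + 1) := by gcongr; exact Int.ceil_lt_add_one _
  have hne : t / ε - 1 / 2 ≠ m := fun h => ht ⟨m, by simp only [← h, hscale]; ring⟩
  have hlow : ε * (t / ε - 1 / 2) < ε * m := by gcongr; exact (Int.le_ceil _).lt_of_ne hne
  exact ⟨m, abs_lt.2 ⟨by linarith, by linarith⟩⟩

theorem ae_exists_mem_gridCube [Fintype ι] {ε : ℝ} (hε : 0 < ε) :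
    ∀ᵐ x : EuclideanSpace ℝ ι, ∃ j, x ∈ gridCube ε j := by
  have hcoord (i : ι) :
      ∀ᵐ x : EuclideanSpace ℝ ι, x i ∉ range fun m : ℤ => ε * m + ε / 2 :=
    ((Measure.quasiMeasurePreserving_eval _ i).comp
      (PiLp.volume_preserving_ofLp ι).quasiMeasurePreserving).ae
      ((countable_range _).ae_notMem volume)
  filter_upwards [ae_all_iff.2 hcoord] with x hx
  choose j hj using fun i => exists_abs_sub_mul_lt_half hε (hx i)
  exact ⟨j, hj⟩

theorem rescale_eq [Fintype ι] (ε : ℝ) (k : ι → ℤ) :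
    rescale ε k = fun x => ε⁻¹ • x - WithLp.toLp 2 fun i => (k i : ℝ) := by
  ext x i
  simp [rescale, div_eq_inv_mul]

theorem preimage_rescale_gridCube {ε : ℝ} (hε : 0 < ε) (j k : ι → ℤ) :
    rescale ε k ⁻¹' gridCube 1 (j - k) = gridCube ε j := by
  ext x
  refine forall_congr' fun i => ?_
  have : x i / ε - k i - 1 * ((j - k) i : ℤ) = (x i - ε * j i) / ε := by
    push_cast [Pi.sub_apply]; field_simp; ring
  simp only [rescale, this, abs_div, abs_of_pos hε, div_lt_iff₀ hε]
  constructor <;> intro h <;> linarith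

theorem measurableEmbedding_rescale [Fintype ι] {ε : ℝ} (hε : ε ≠ 0) (k : ι → ℤ) :
    MeasurableEmbedding (rescale ε k) := by
  rw [rescale_eq]
  exact ((Homeomorph.smulOfNeZero ε⁻¹ (inv_ne_zero hε)).trans
    (Homeomorph.subRight _)).measurableEmbedding

theorem map_rescale_volume [Fintype ι] {ε : ℝ} (hε : 0 < ε) (k : ι → ℤ) :
    Measure.map (rescale ε k) volume = ENNReal.ofReal (ε ^ Fintype.card ι) • volume := by
  rw [rescale_eq, ← Function.comp_def (fun y => y - _) (fun x => ε⁻¹ • x),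
    ← Measure.map_map (measurable_sub_const _) (measurable_const_smul _),
    Measure.map_addHaar_smul _ (inv_ne_zero hε.ne'), Measure.map_smul,
    (measurePreserving_sub_right volume _).map_eq, finrank_euclideanSpace, inv_pow, inv_inv,
    abs_of_pos (by positivity)]

theorem setIntegral_gridCube_comp_rescale [Fintype ι] {F : Type*} [NormedAddCommGroup F]
    [NormedSpace ℝ F] {ε : ℝ} (hε : 0 < ε) (f : EuclideanSpace ℝ ι → F) (j k : ι → ℤ) :
    ∫ x in gridCube ε j, f (rescale ε k x) =
      ε ^ Fintype.card ι • ∫ y in gridCube 1 (j - k), f y := by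
  rw [← preimage_rescale_gridCube hε j k,
    ← (measurableEmbedding_rescale hε.ne' k).setIntegral_map, map_rescale_volume hε,
    Measure.restrict_smul, integral_smul_measure, ENNReal.toReal_ofReal (by positivity)]

theorem integrableOn_gridCube_comp_rescale [Fintype ι] {ε : ℝ} (hε : 0 < ε)
    {f : EuclideanSpace ℝ ι → ℝ} {j k : ι → ℤ} (hf : IntegrableOn f (gridCube 1 (j - k))) :
    IntegrableOn (fun x => f (rescale ε k x)) (gridCube ε j) := by
  rw [← preimage_rescale_gridCube hε j k]
  refine (measurableEmbedding_rescale hε.ne' k).integrableOn_map_iff.1 ?_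
  rw [map_rescale_volume hε, IntegrableOn, Measure.restrict_smul]
  exact hf.smul_measure ENNReal.ofReal_ne_top

theorem setIntegral_le_sum_gridCube [Fintype ι] {ε : ℝ} (hε : 0 < ε)
    {S : Set (EuclideanSpace ℝ ι)} {J : Finset (ι → ℤ)}
    (hJ : ∀ j, (S ∩ gridCube ε j).Nonempty → j ∈ J) {f : EuclideanSpace ℝ ι → ℝ} (hf : 0 ≤ f)
    (hfJ : ∀ j ∈ J, IntegrableOn f (gridCube ε j)) :
    ∫ x in S, f x ≤ ∑ j ∈ J, ∫ x in gridCube ε j, f x := by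
  have hcover : S ≤ᵐ[volume] ⋃ j ∈ J, gridCube ε j := by
    filter_upwards [ae_exists_mem_gridCube hε] with x ⟨j, hj⟩ hxS
    exact mem_biUnion (hJ j ⟨x, hxS, hj⟩) hj
  rw [← integral_biUnion_finset J (fun j _ => (isOpen_gridCube ε j).measurableSet)
    (fun a _ b _ hab => pairwise_disjoint_gridCube hε hab) hfJ]
  exact setIntegral_mono_set (integrableOn_finset_iUnion.2 hfJ) (ae_of_all _ hf) hcover

theorem gridCube_sub_subset_ball [Fintype ι] {ε M : ℝ} (hε : 0 < ε) (hε1 : ε ≤ 1)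
    {D : Set (EuclideanSpace ℝ ι)} (hDM : D ⊆ ball 0 M) {j k : ι → ℤ}
    (hj : (D ∩ gridCube ε j).Nonempty) (hk : (D ∩ gridCube ε k).Nonempty) :
    gridCube 1 (j - k) ⊆ ball 0 ((2 * M + 2 * √(Fintype.card ι)) / ε) := by
  obtain ⟨x, hxD, hx⟩ := hj
  obtain ⟨y, hyD, hy⟩ := hk
  have hxM := mem_ball_zero_iff.1 (hDM hxD)
  have hyM := mem_ball_zero_iff.1 (hDM hyD)
  intro z hz
  have hcoord (i : ι) : |(ε • z - (x - y)) i| ≤ 2 := by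
    have hzi : |ε * z i - ε * (j i - k i)| < ε / 2 := by
      have := hz i
      push_cast [Pi.sub_apply, one_mul] at this
      rw [← mul_sub, abs_mul, abs_of_pos hε]
      linarith [mul_lt_mul_of_pos_left this hε]
    obtain ⟨h1, h2⟩ := abs_lt.1 hzi
    obtain ⟨h3, h4⟩ := abs_lt.1 (hx i)
    obtain ⟨h5, h6⟩ := abs_lt.1 (hy i)
    simp only [PiLp.sub_apply, PiLp.smul_apply, smul_eq_mul]
    exact abs_le.2 ⟨by linarith, by linarith⟩
  have hεz : ‖ε • z‖ < 2 * M + 2 * √(Fintype.card ι) :=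
    calc ‖ε • z‖ ≤ ‖x - y‖ + ‖ε • z - (x - y)‖ := norm_le_insert' _ _
      _ ≤ ‖x‖ + ‖y‖ + √(Fintype.card ι) * 2 :=
        add_le_add (norm_sub_le x y) (EuclideanSpace.norm_le_sqrt_card_mul zero_le_two hcoord)
      _ < 2 * M + 2 * √(Fintype.card ι) := by linarith
  rw [norm_smul, Real.norm_of_nonneg hε.le] at hεz
  rw [mem_ball_zero_iff, lt_div_iff₀ hε]
  linarith

theorem tsum_setIntegral_comp_rescale_le [Fintype ι] {ε : ℝ} (hε : 0 < ε)
    {S B : Set (EuclideanSpace ℝ ι)} {K : Set (ι → ℤ)} {J : Finset (ι → ℤ)}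
    (hJ : ∀ j, (S ∩ gridCube ε j).Nonempty → j ∈ J)
    (hB : ∀ j ∈ J, ∀ k ∈ K, gridCube 1 (j - k) ⊆ B)
    {f : EuclideanSpace ℝ ι → ℝ} (hf : 0 ≤ f) (hfB : IntegrableOn f B) :
    ∑' k : K, ∫ x in S, f (rescale ε k x) ≤
      ε ^ Fintype.card ι * J.card * ∫ y in B, f y := by
  refine Real.tsum_le_of_sum_le (fun k => integral_nonneg fun x => hf (rescale ε k x)) fun u => ?_
  have hdisj (j : ι → ℤ) :
      (u : Set K).Pairwise (Disjoint on fun k : K => gridCube 1 (j - (k : ι → ℤ))) :=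
    fun k _ k' _ hne => pairwise_disjoint_gridCube one_pos
      fun h => hne (Subtype.ext (sub_right_injective h))
  calc ∑ k ∈ u, ∫ x in S, f (rescale ε k x)
      ≤ ∑ k ∈ u, ∑ j ∈ J, ε ^ Fintype.card ι * ∫ y in gridCube 1 (j - k.1), f y := by
        gcongr with k
        refine (setIntegral_le_sum_gridCube hε hJ (fun x => hf (rescale ε k x)) fun j hj =>
          integrableOn_gridCube_comp_rescale hε (hfB.mono_set (hB j hj k k.2))).trans_eq ?_
        simp_rw [setIntegral_gridCube_comp_rescale hε, smul_eq_mul]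
    _ = ε ^ Fintype.card ι * ∑ j ∈ J, ∑ k ∈ u, ∫ y in gridCube 1 (j - k.1), f y := by
        rw [Finset.sum_comm]; simp_rw [Finset.mul_sum]
    _ ≤ ε ^ Fintype.card ι * ∑ _j ∈ J, ∫ y in B, f y := by
        gcongr with j hj
        exact sum_setIntegral_le_setIntegral hf hfB
          (fun k _ => (isOpen_gridCube 1 _).measurableSet) (hdisj j) fun k _ => hB j hj k k.2
    _ = ε ^ Fintype.card ι * J.card * ∫ y in B, f y := by
        rw [Finset.sum_const, nsmul_eq_mul, mul_assoc]

end Grid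

theorem boundary_layer_sum_estimate_general
    (d : ℕ) (hd : 2 ≤ d)
    (D : Set (EuclideanSpace ℝ (Fin d)))
    (hDb : Bornology.IsBounded D)
    (g : EuclideanSpace ℝ (Fin d) → ℝ) (hgm : Measurable g)
    (Cg : ℝ) (hCg : 0 < Cg)
    (hgbd : ∀ y, |g y| ≤ Cg * (1 + ‖y‖) ^ ((1 : ℝ) - d))
    (CJ : ℝ) (hCJ : 0 < CJ)
    (hJcard : ∀ ε : ℝ, ε ∈ Set.Ioo (0 : ℝ) 1 →
      ({j : Fin d → ℤ | ∃ x ∈ D, infDist x (frontier D) < ε ∧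
          ∀ i, |x i - ε * (j i : ℝ)| < ε / 2}.Finite ∧
       ({j : Fin d → ℤ | ∃ x ∈ D, infDist x (frontier D) < ε ∧
          ∀ i, |x i - ε * (j i : ℝ)| < ε / 2}.ncard : ℝ) ≤ CJ * ε ^ ((1 : ℝ) - d))) :
    ∃ ρ C' : ℝ, 0 < ρ ∧ 0 < C' ∧
      ∀ ε : ℝ, ε ∈ Set.Ioo (0 : ℝ) 1 →
        (∑' k : {k : Fin d → ℤ | ∃ x ∈ D, ∀ i, |x i - ε * (k i : ℝ)| < ε / 2},
            ∫ x in {x ∈ D | infDist x (frontier D) < ε},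
              (g (show EuclideanSpace ℝ (Fin d) from
                  WithLp.toLp 2 (fun i => x i / ε - ((k : Fin d → ℤ) i : ℝ)))) ^ 2)
          ≤ ε ^ d * ({j : Fin d → ℤ | ∃ x ∈ D, infDist x (frontier D) < ε ∧
              ∀ i, |x i - ε * (j i : ℝ)| < ε / 2}.ncard : ℝ)
            * ∫ y in ball (0 : EuclideanSpace ℝ (Fin d)) (ρ / ε), (g y) ^ 2 ∧
        ε ^ d * ({j : Fin d → ℤ | ∃ x ∈ D, infDist x (frontier D) < ε ∧
              ∀ i, |x i - ε * (j i : ℝ)| < ε / 2}.ncard : ℝ)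
            * (∫ y in ball (0 : EuclideanSpace ℝ (Fin d)) (ρ / ε), (g y) ^ 2)
          ≤ C' * ε * (if d = 2 then 1 + Real.log (1 / ε) else 1) := by
  obtain ⟨M, hM, hDM⟩ := hDb.subset_ball_lt 0 0
  have hfinrank : Module.finrank ℝ (EuclideanSpace ℝ (Fin d)) = d := finrank_euclideanSpace_fin
  set ρ := 2 * M + 2 * √d
  set V := (volume : Measure (EuclideanSpace ℝ (Fin d))).real (ball 0 1)
  have hV : 0 < V := ENNReal.toReal_pos (measure_ball_pos _ _ one_pos).ne' measure_ball_lt_top.ne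
  have hρ : 0 < ρ := by positivity
  have hlogρ : 0 ≤ Real.log (1 + ρ) := Real.log_nonneg (by linarith)
  refine ⟨ρ, CJ * (Cg ^ 2 * (d * V * (1 + Real.log (1 + ρ)))), hρ, by positivity,
    fun ε hε => ?_⟩
  obtain ⟨hJfin, hJle⟩ := hJcard ε hε
  obtain ⟨hε0, hε1⟩ := hε
  refine ⟨?_, ?_⟩
  · have := tsum_setIntegral_comp_rescale_le hε0 (S := {x ∈ D | infDist x (frontier D) < ε})
      (K := {k : Fin d → ℤ | ∃ x ∈ D, ∀ i, |x i - ε * (k i : ℝ)| < ε / 2})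
      (J := hJfin.toFinset)
      (fun j ⟨x, ⟨hxD, hxε⟩, hxj⟩ => hJfin.mem_toFinset.2 ⟨x, hxD, hxε, hxj⟩)
      (fun j hj k hk => by
        obtain ⟨x, hxD, -, hxj⟩ := hJfin.mem_toFinset.1 hj
        exact gridCube_sub_subset_ball hε0 hε1.le hDM ⟨x, hxD, hxj⟩ hk)
      (fun y => sq_nonneg (g y)) (integrableOn_sq_of_abs_le_mul_one_add_norm_rpow volume
        hgm.aestronglyMeasurable hgbd isBounded_ball)
    rwa [Fintype.card_fin, ← Set.ncard_eq_toFinset_card _ hJfin] at this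
  · have hball := setIntegral_ball_div_sq_le volume (by rw [hfinrank]; exact hd)
      hgm.aestronglyMeasurable (by simpa only [hfinrank] using hgbd) hρ.le hε0 hε1.le
    rw [hfinrank] at hball
    have hεd : ε ^ d * (CJ * ε ^ ((1 : ℝ) - d)) = CJ * ε := by
      rw [mul_left_comm, ← Real.rpow_natCast, ← Real.rpow_add hε0, add_sub_cancel,
        Real.rpow_one]
    calc _ ≤ ε ^ d * (CJ * ε ^ ((1 : ℝ) - d)) *
          (Cg ^ 2 * (d * V * (1 + Real.log (1 + ρ))) *
            if d = 2 then 1 + Real.log (1 / ε) else 1) := by gcongr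
      _ = _ := by rw [hεd]; ring

/-- Boundary-layer estimate: for `g` decaying like `(1+|y|)^{1-d}`, the sum over
cubes meeting `𝒟` of `∫_{𝒟_ε^c} g(x/ε − k)² dx` is bounded by
`ε^d Card(J_ε) ∫_{B(0,ρ/ε)} g² ≤ C' ε R_{d,ε}`, with `R_{d,ε} = 1 + log(1/ε)`
if `d = 2` and `R_{d,ε} = 1` if `d ≥ 3`. -/
theorem boundary_layer_sum_estimate
    (d : ℕ) (hd : 2 ≤ d)
    (D : Set (EuclideanSpace ℝ (Fin d))) (hDo : IsOpen D)
    (hDb : Bornology.IsBounded D)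
    (g : EuclideanSpace ℝ (Fin d) → ℝ) (hgm : Measurable g)
    (Cg : ℝ) (hCg : 0 < Cg)
    (hgbd : ∀ y, |g y| ≤ Cg * (1 + ‖y‖) ^ ((1 : ℝ) - d))
    (CJ : ℝ) (hCJ : 0 < CJ)
    (hJcard : ∀ ε : ℝ, ε ∈ Set.Ioo (0 : ℝ) 1 →
      ({j : Fin d → ℤ | ∃ x ∈ D, infDist x (frontier D) < ε ∧
          ∀ i, |x i - ε * (j i : ℝ)| < ε / 2}.Finite ∧
       ({j : Fin d → ℤ | ∃ x ∈ D, infDist x (frontier D) < ε ∧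
          ∀ i, |x i - ε * (j i : ℝ)| < ε / 2}.ncard : ℝ) ≤ CJ * ε ^ ((1 : ℝ) - d))) :
    ∃ ρ C' : ℝ, 0 < ρ ∧ 0 < C' ∧
      ∀ ε : ℝ, ε ∈ Set.Ioo (0 : ℝ) 1 →
        (∑' k : {k : Fin d → ℤ | ∃ x ∈ D, ∀ i, |x i - ε * (k i : ℝ)| < ε / 2},
            ∫ x in {x ∈ D | infDist x (frontier D) < ε},
              (g (show EuclideanSpace ℝ (Fin d) from
                  WithLp.toLp 2 (fun i => x i / ε - ((k : Fin d → ℤ) i : ℝ)))) ^ 2)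
          ≤ ε ^ d * ({j : Fin d → ℤ | ∃ x ∈ D, infDist x (frontier D) < ε ∧
              ∀ i, |x i - ε * (j i : ℝ)| < ε / 2}.ncard : ℝ)
            * ∫ y in ball (0 : EuclideanSpace ℝ (Fin d)) (ρ / ε), (g y) ^ 2 ∧
        ε ^ d * ({j : Fin d → ℤ | ∃ x ∈ D, infDist x (frontier D) < ε ∧
              ∀ i, |x i - ε * (j i : ℝ)| < ε / 2}.ncard : ℝ)
            * (∫ y in ball (0 : EuclideanSpace ℝ (Fin d)) (ρ / ε), (g y) ^ 2)
          ≤ C' * ε * (if d = 2 then 1 + Real.log (1 / ε) else 1) :=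
  boundary_layer_sum_estimate_general d hd D hDb g hgm Cg hCg hgbd CJ hCJ hJcard
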